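/- Define R(α,n,λ) = (α λ^α sin(απ)/π) · ∫₀¹ t^{α−1}(1−t)^{αn} [ 1/|t^α − λ^α e^{−iαπ}|² + λ^{αn}/|e^{−iαπ} − (λt)^α|² ] dt. Then for α ∈ (0,1), n ≥ 1, and λ ∈ (0,1], one has 0 < R(α,n,λ) < 1 − α < 1. -/

import Mathlib

/-- The error term `R(α,n,λ)` in the optimal neo-classical identity. -/
noncomputable def Rerr (α : ℝ) (n : ℕ) (lam : ℝ) : ℝ :=
  α * lam ^ α * Real.sin (α * Real.pi) / Real.pi *
    ∫ t in (0:ℝ)..1, t ^ (α - 1) * (1 - t) ^ (α * n) *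
      (1 / (t ^ (2 * α) - 2 * t ^ α * lam ^ α * Real.cos (α * Real.pi) + lam ^ (2 * α)) +
       lam ^ (α * n) /
         (1 - 2 * (lam * t) ^ α * Real.cos (α * Real.pi) + (lam * t) ^ (2 * α)))

/-!
Write `m = λ^α` and `θ = απ`. The two denominators are `(t^α - m cos θ)² + (m sin θ)²` and
`(m t^α - cos θ)² + sin² θ`, so both terms of the integrand have the shape
`t^(α-1) / ((k t^α - e)² + d²)`, with primitive `arctan ((k t^α - e) / d) / (α k d)`.
Dropping the weights `(1 - t)^(αn) < 1` and `λ^(αn) ≤ 1` strictly increases the integral,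
and without them `R` becomes `(π - θ) / π = 1 - α` by an elementary arctangent identity.
-/

open Real Set MeasureTheory intervalIntegral

noncomputable def cauchyRpow (p k e d t : ℝ) : ℝ := t ^ (p - 1) / ((k * t ^ p - e) ^ 2 + d ^ 2)

section CauchyRpow

variable {p k e d : ℝ}

lemma cauchyRpow_pos (hd : 0 < d) {t : ℝ} (ht : 0 < t) : 0 < cauchyRpow p k e d t := by
  unfold cauchyRpow
  positivity

lemma hasDerivAt_arctan_rpow (hp : p ≠ 0) (hk : k ≠ 0) (hd : 0 < d) {t : ℝ} (ht : 0 < t) :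
    HasDerivAt (fun x => arctan ((k * x ^ p - e) / d) / (p * k * d))
      (cauchyRpow p k e d t) t := by
  have h := (((hasDerivAt_rpow_const (p := p) (Or.inl ht.ne')).const_mul k).sub_const e
    |>.div_const d).arctan.div_const (p * k * d)
  refine h.congr_deriv ?_
  have hden : 0 < (k * t ^ p - e) ^ 2 + d ^ 2 := by positivity
  unfold cauchyRpow
  field_simp
  ring

lemma continuous_arctan_rpow (hp : 0 ≤ p) :
    Continuous (fun x => arctan ((k * x ^ p - e) / d) / (p * k * d)) := by
  have := continuous_rpow_const hp
  fun_prop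

lemma intervalIntegrable_cauchyRpow (hp : 0 < p) (hk : k ≠ 0) (hd : 0 < d) {b : ℝ}
    (hb : 0 ≤ b) : IntervalIntegrable (cauchyRpow p k e d) volume 0 b := by
  exact intervalIntegrable_deriv_of_nonneg (continuous_arctan_rpow hp.le).continuousOn
    (fun t ht => hasDerivAt_arctan_rpow hp.ne' hk hd (by simpa [hb] using ht.1))
    (fun t ht => (cauchyRpow_pos hd (by simpa [hb] using ht.1)).le)

lemma integral_cauchyRpow (hp : 0 < p) (hk : k ≠ 0) (hd : 0 < d) {b : ℝ} (hb : 0 ≤ b) :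
    ∫ t in 0..b, cauchyRpow p k e d t =
      (arctan ((k * b ^ p - e) / d) + arctan (e / d)) / (p * k * d) := by
  rw [integral_eq_sub_of_hasDerivAt_of_le hb (continuous_arctan_rpow hp.le).continuousOn
    (fun t ht => hasDerivAt_arctan_rpow hp.ne' hk hd ht.1)
    (intervalIntegrable_cauchyRpow hp hk hd hb)]
  simp only [zero_rpow hp.ne', mul_zero, zero_sub, neg_div, arctan_neg, sub_neg_eq_add]
  ring

end CauchyRpow

lemma arctan_cos_div_sin {θ : ℝ} (h0 : 0 < θ) (hπ : θ < π) :
    arctan (cos θ / sin θ) = π / 2 - θ := by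
  rw [← inv_div, ← tan_eq_sin_div_cos, ← tan_pi_div_two_sub, arctan_tan] <;> linarith

lemma arctan_add_arctan_eq_of_mul_cos_lt_one {θ m : ℝ} (h0 : 0 < θ) (hπ : θ < π) (hm : 0 < m)
    (hmc : m * cos θ < 1) :
    arctan ((1 - m * cos θ) / (m * sin θ)) + arctan ((m - cos θ) / sin θ) = θ := by
  have hs : 0 < sin θ := sin_pos_of_pos_of_lt_pi h0 hπ
  have hpyth := sin_sq_add_cos_sq θ
  have hX : 0 < m * sin θ / (1 - m * cos θ) := div_pos (by positivity) (by linarith)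
  have hcomp : arctan ((1 - m * cos θ) / (m * sin θ)) =
      π / 2 - arctan (m * sin θ / (1 - m * cos θ)) := by
    rw [← arctan_inv_of_pos hX, inv_div]
  have hsum : arctan ((m - cos θ) / sin θ) + arctan (cos θ / sin θ) =
      arctan (m * sin θ / (1 - m * cos θ)) := by
    rw [arctan_add]
    · congr 1
      have hne : 1 - m * cos θ ≠ 0 := by linarith
      have hnum : sin θ * sin θ - (m - cos θ) * cos θ = 1 - m * cos θ := by
        linear_combination hpyth
      rw [← add_div, sub_add_cancel, div_mul_div_comm, one_sub_div (by positivity), hnum]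
      field_simp
    · rw [div_mul_div_comm, div_lt_one (by positivity)]
      nlinarith
  linarith [arctan_cos_div_sin h0 hπ]

lemma integral_mul_lt_integral {f g : ℝ → ℝ} {a b : ℝ} (hab : a < b)
    (hf : IntervalIntegrable f volume a b) (hg : ContinuousOn g (uIcc a b))
    (hf0 : ∀ x ∈ Ioo a b, 0 < f x) (hg1 : ∀ x ∈ Ioo a b, g x < 1) :
    ∫ x in a..b, f x * g x < ∫ x in a..b, f x := by
  have hfg := hf.mul_continuousOn hg
  rw [← sub_pos, ← integral_sub hf hfg]
  refine intervalIntegral_pos_of_pos_on (hf.sub hfg) (fun x hx => ?_) hab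
  nlinarith [hf0 x hx, hg1 x hx]

lemma integral_weighted_add_pos_and_lt {f g : ℝ → ℝ} {ν L : ℝ}
    (hf : IntervalIntegrable f volume 0 1) (hg : IntervalIntegrable g volume 0 1)
    (hf0 : ∀ t ∈ Ioo (0 : ℝ) 1, 0 < f t) (hg0 : ∀ t ∈ Ioo (0 : ℝ) 1, 0 < g t)
    (hν : 0 < ν) (hL0 : 0 ≤ L) (hL1 : L ≤ 1) :
    0 < ∫ t in 0..1, f t * (1 - t) ^ ν + g t * (L * (1 - t) ^ ν) ∧
      ∫ t in 0..1, f t * (1 - t) ^ ν + g t * (L * (1 - t) ^ ν) <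
        (∫ t in 0..1, f t) + ∫ t in 0..1, g t := by
  have hw : ContinuousOn (fun t : ℝ => (1 - t) ^ ν) (uIcc 0 1) :=
    ((continuous_rpow_const hν.le).comp (continuous_const.sub continuous_id)).continuousOn
  have hLw : ContinuousOn (fun t : ℝ => L * (1 - t) ^ ν) (uIcc 0 1) := continuousOn_const.mul hw
  have hw0 : ∀ t ∈ Ioo (0 : ℝ) 1, 0 < (1 - t) ^ ν := fun t ht =>
    rpow_pos_of_pos (by linarith [ht.2]) _
  have hw1 : ∀ t ∈ Ioo (0 : ℝ) 1, (1 - t) ^ ν < 1 := fun t ht =>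
    rpow_lt_one (by linarith [ht.2]) (by linarith [ht.1]) hν
  have hLw1 : ∀ t ∈ Ioo (0 : ℝ) 1, L * (1 - t) ^ ν < 1 := fun t ht =>
    (mul_le_of_le_one_left (hw0 t ht).le hL1).trans_lt (hw1 t ht)
  have hint := (hf.mul_continuousOn hw).add (hg.mul_continuousOn hLw)
  constructor
  · refine intervalIntegral_pos_of_pos_on hint (fun t ht => ?_) zero_lt_one
    have := hf0 t ht
    have := hg0 t ht
    have := hw0 t ht
    positivity
  · rw [integral_add (hf.mul_continuousOn hw) (hg.mul_continuousOn hLw)]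
    exact add_lt_add (integral_mul_lt_integral zero_lt_one hf hw hf0 hw1)
      (integral_mul_lt_integral zero_lt_one hg hLw hg0 hLw1)

lemma Rerr_eq (α : ℝ) (n : ℕ) {lam : ℝ} (hl0 : 0 < lam) :
    Rerr α n lam = α * lam ^ α * sin (α * π) / π *
      ∫ t in 0..1,
        cauchyRpow α 1 (lam ^ α * cos (α * π)) (lam ^ α * sin (α * π)) t *
            (1 - t) ^ (α * n) +
          cauchyRpow α (lam ^ α) (cos (α * π)) (sin (α * π)) t *
            (lam ^ (α * n) * (1 - t) ^ (α * n)) := by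
  unfold Rerr cauchyRpow
  congr 1
  refine integral_congr fun t ht => ?_
  have ht0 : 0 ≤ t := by simpa using ht.1
  have hpyth := sin_sq_add_cos_sq (α * π)
  have hsq : ∀ x : ℝ, 0 ≤ x → x ^ (2 * α) = (x ^ α) ^ 2 := fun x hx => by
    rw [mul_comm, rpow_mul hx, rpow_two]
  have hden1 : t ^ (2 * α) - 2 * t ^ α * lam ^ α * cos (α * π) + lam ^ (2 * α) =
      (1 * t ^ α - lam ^ α * cos (α * π)) ^ 2 + (lam ^ α * sin (α * π)) ^ 2 := by
    rw [hsq t ht0, hsq lam hl0.le]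
    linear_combination (-(lam ^ α) ^ 2) * hpyth
  have hden2 : 1 - 2 * (lam * t) ^ α * cos (α * π) + (lam * t) ^ (2 * α) =
      (lam ^ α * t ^ α - cos (α * π)) ^ 2 + sin (α * π) ^ 2 := by
    rw [hsq _ (by positivity), mul_rpow hl0.le ht0]
    linear_combination (-1 : ℝ) * hpyth
  rw [hden1, hden2]
  ring

lemma mul_add_integral_cauchyRpow {p θ m : ℝ} (hp : 0 < p) (h0 : 0 < θ) (hπ : θ < π)
    (hm : 0 < m) (hmc : m * cos θ < 1) :
    p * m * sin θ * ((∫ t in 0..1, cauchyRpow p 1 (m * cos θ) (m * sin θ) t) +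
      ∫ t in 0..1, cauchyRpow p m (cos θ) (sin θ) t) = π - θ := by
  have hs : 0 < sin θ := sin_pos_of_pos_of_lt_pi h0 hπ
  rw [integral_cauchyRpow hp one_ne_zero (by positivity) zero_le_one,
    integral_cauchyRpow hp hm.ne' hs zero_le_one, mul_div_mul_left _ _ hm.ne']
  simp only [one_rpow, mul_one]
  have := arctan_add_arctan_eq_of_mul_cos_lt_one h0 hπ hm hmc
  have := arctan_cos_div_sin h0 hπ
  field_simp
  linarith

/-- Bound on the error term for `0 < α < 1`. -/
theorem Rerr_bound (α : ℝ) (hα0 : 0 < α) (hα1 : α < 1)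
    (n : ℕ) (hn : 1 ≤ n) (lam : ℝ) (hl0 : 0 < lam) (hl1 : lam ≤ 1) :
    0 < Rerr α n lam ∧ Rerr α n lam < 1 - α ∧ (1 - α : ℝ) < 1 := by
  have hθ0 : 0 < α * π := by positivity
  have hθπ : α * π < π := by nlinarith [pi_pos]
  have hs : 0 < sin (α * π) := sin_pos_of_pos_of_lt_pi hθ0 hθπ
  have hm : 0 < lam ^ α := rpow_pos_of_pos hl0 α
  have hmc : lam ^ α * cos (α * π) < 1 := by
    have hc : cos (α * π) < 1 := by nlinarith [sin_sq_add_cos_sq (α * π)]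
    have hm1 := rpow_le_one hl0.le hl1 hα0.le
    rcases le_or_gt (cos (α * π)) 0 with h | h <;> nlinarith
  have hν : 0 < α * n := mul_pos hα0 (by exact_mod_cast hn)
  obtain ⟨hpos, hlt⟩ := integral_weighted_add_pos_and_lt
    (intervalIntegrable_cauchyRpow hα0 one_ne_zero (mul_pos hm hs) zero_le_one)
    (intervalIntegrable_cauchyRpow hα0 hm.ne' hs zero_le_one)
    (fun t ht => cauchyRpow_pos (mul_pos hm hs) ht.1) (fun t ht => cauchyRpow_pos hs ht.1) hν
    (rpow_nonneg hl0.le _) (rpow_le_one hl0.le hl1 hν.le)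
  rw [Rerr_eq α n hl0]
  refine ⟨mul_pos (by positivity) hpos,
    (mul_lt_mul_of_pos_left hlt (by positivity)).trans_eq ?_, by linarith⟩
  rw [div_mul_eq_mul_div, mul_add_integral_cauchyRpow hα0 hθ0 hθπ hm hmc]
  field_simp
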